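/- arXiv:2601.21395 — 2 statements merged into one kernel-verified Lean document; each statement's English description precedes it below -/
import Mathlib

section
/- Let n, m, ℓ be integers with n−1 ≥ m ≥ ℓ ≥ 0 and n ≥ 2. Then 𝔷_n(1,…,1) (m entries) · 𝔷_n(−1,…,−1) (ℓ entries) = C(n−m+ℓ−1, n−m−1) · 𝔷_n(1,…,1) (m−ℓ entries) + n · Σ_{j=0}^{n−m−2} C(n−m+ℓ−3−2j, ℓ−1−j) · 𝒴_n(2^{m−ℓ+1+j}, 1^{n−m+ℓ−3−2j}), where the factor n arises as ∏_{j=1}^{n−1}(1 − ζ_n^{j}) = n. -/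
open Finset

/-- The primitive n-th root of unity ζ_n = exp(2πi/n). -/
noncomputable def zetaN (n : ℕ) : ℂ := Complex.exp (2 * Real.pi * Complex.I / n)

/-- The finite q-multiple harmonic sum 𝔷_n(s_1,…,s_m) for a list of integer exponents:
the sum over 1 ≤ i_1 < ⋯ < i_m ≤ n-1 of ∏_j (1 - ζ_n^{i_j})^{-s_j}. -/
noncomputable def qhs (n : ℕ) (s : List ℤ) : ℂ :=
  ∑ t ∈ (Finset.Icc 1 (n - 1)).powersetCard s.length,
    (List.zipWith (fun i e => (1 - zetaN n ^ i) ^ (-e)) (t.sort (· ≤ ·)) s).prod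

/-- Sum of 𝔷_n(σ) over all distinct rearrangements σ of the list L of exponents. -/
noncomputable def Yperm (n : ℕ) (L : List ℤ) : ℂ :=
  ∑ σ ∈ L.permutations.toFinset, qhs n σ

/-- 𝒴_n(3^a, 2^b, 1^c): the sum of 𝔷_n(σ) over all distinct rearrangements of a string of
a threes, b twos and c ones; interpreted as 0 if some block length is negative. -/
noncomputable def Y3 (n : ℕ) (a b c : ℤ) : ℂ :=
  if 0 ≤ a ∧ 0 ≤ b ∧ 0 ≤ c then
    Yperm n (List.replicate a.toNat 3 ++ List.replicate b.toNat 2 ++ List.replicate c.toNat 1)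
  else 0

/-- Binomial coefficient C(a,b) for integers, interpreted as 0 when b < 0 or b > a. -/
def ichoose (a b : ℤ) : ℤ :=
  if 0 ≤ b ∧ b ≤ a then (a.toNat).choose b.toNat else 0


open Finset

variable {ι R : Type*} [DecidableEq ι] [CommRing R]

/-- Splitting a pair (U,V) of disjoint subsets into (union, first part). -/
lemma sum_pC_split (T : Finset ι) (p q : ℕ) (g : Finset ι → Finset ι → R) :
    ∑ U ∈ T.powersetCard p, ∑ V ∈ (T \ U).powersetCard q, g U V
      = ∑ E ∈ T.powersetCard (p + q), ∑ U ∈ E.powersetCard p, g U (E \ U) := by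
  rw [Finset.sum_sigma', Finset.sum_sigma']
  refine Finset.sum_nbij' (fun x => ⟨x.1 ∪ x.2, x.1⟩) (fun x => ⟨x.2, x.1 \ x.2⟩) ?_ ?_ ?_ ?_ ?_
  · rintro ⟨U, V⟩ h
    simp only [Finset.mem_sigma, Finset.mem_powersetCard] at h ⊢
    obtain ⟨⟨hUT, hU⟩, hVT, hV⟩ := h
    have hd : Disjoint U V := Finset.disjoint_left.2 fun a haU haV => (Finset.mem_sdiff.1 (hVT haV)).2 haU
    refine ⟨⟨?_, ?_⟩, Finset.subset_union_left, hU⟩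
    · exact Finset.union_subset hUT (hVT.trans Finset.sdiff_subset)
    · rw [Finset.card_union_of_disjoint hd, hU, hV]
  · rintro ⟨E, U⟩ h
    simp only [Finset.mem_sigma, Finset.mem_powersetCard] at h ⊢
    obtain ⟨⟨hET, hE⟩, hUE, hU⟩ := h
    refine ⟨⟨hUE.trans hET, hU⟩, Finset.sdiff_subset_sdiff hET (le_refl U), ?_⟩
    rw [Finset.card_sdiff_of_subset hUE, hE, hU, Nat.add_sub_cancel_left]
  · rintro ⟨U, V⟩ h
    simp only [Finset.mem_sigma, Finset.mem_powersetCard] at h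
    obtain ⟨⟨hUT, hU⟩, hVT, hV⟩ := h
    have hd : Disjoint U V := Finset.disjoint_left.2 fun a haU haV => (Finset.mem_sdiff.1 (hVT haV)).2 haU
    exact Sigma.ext rfl (heq_of_eq (Finset.union_sdiff_cancel_left hd))
  · rintro ⟨E, U⟩ h
    simp only [Finset.mem_sigma, Finset.mem_powersetCard] at h
    exact Sigma.ext (Finset.union_sdiff_of_subset h.2.1) (by simp)
  · rintro ⟨U, V⟩ h
    simp only [Finset.mem_sigma, Finset.mem_powersetCard] at h
    obtain ⟨⟨hUT, hU⟩, hVT, hV⟩ := h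
    have hd : Disjoint U V := Finset.disjoint_left.2 fun a haU haV => (Finset.mem_sdiff.1 (hVT haV)).2 haU
    rw [Finset.union_sdiff_cancel_left hd]

/-- Decompose subsets B of S of size b according to (B ∩ A, B \ A). -/
lemma sum_pC_inter (S A : Finset ι) (hA : A ⊆ S) (b : ℕ) (g : Finset ι → R) :
    ∑ B ∈ S.powersetCard b, g B
      = ∑ k ∈ Finset.range (b + 1), ∑ D ∈ A.powersetCard k,
          ∑ V ∈ (S \ A).powersetCard (b - k), g (D ∪ V) := by
  have : ∀ k ∈ Finset.range (b+1), (∑ D ∈ A.powersetCard k,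
          ∑ V ∈ (S \ A).powersetCard (b - k), g (D ∪ V))
      = ∑ x ∈ (A.powersetCard k) ×ˢ ((S \ A).powersetCard (b - k)), g (x.1 ∪ x.2) := by
    intro k _; rw [Finset.sum_product]
  rw [Finset.sum_congr rfl this, Finset.sum_sigma']
  refine (Finset.sum_nbij' (fun x => x.2.1 ∪ x.2.2)
    (fun B => ⟨(B ∩ A).card, (B ∩ A, B \ A)⟩) ?_ ?_ ?_ ?_ ?_).symm
  · rintro ⟨k, D, V⟩ h
    simp only [Finset.mem_sigma, Finset.mem_range, Finset.mem_product,
      Finset.mem_powersetCard] at h ⊢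
    obtain ⟨hk, ⟨hDA, hD⟩, hVS, hV⟩ := h
    have hd : Disjoint D V := Finset.disjoint_left.2 fun a haD haV =>
      (Finset.mem_sdiff.1 (hVS haV)).2 (hDA haD)
    constructor
    · exact Finset.union_subset (hDA.trans hA) (hVS.trans Finset.sdiff_subset)
    · rw [Finset.card_union_of_disjoint hd, hD, hV]; omega
  · intro B hB
    simp only [Finset.mem_sigma, Finset.mem_range, Finset.mem_product,
      Finset.mem_powersetCard] at hB ⊢
    obtain ⟨hBS, hB⟩ := hB
    have h1 : (B ∩ A).card + (B \ A).card = B.card := Finset.card_inter_add_card_sdiff B A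
    refine ⟨by omega, ⟨Finset.inter_subset_right, trivial⟩,
      Finset.sdiff_subset_sdiff hBS (le_refl A), by omega⟩
  · rintro ⟨k, D, V⟩ h
    simp only [Finset.mem_sigma, Finset.mem_range, Finset.mem_product,
      Finset.mem_powersetCard] at h
    obtain ⟨hk, ⟨hDA, hD⟩, hVS, hV⟩ := h
    have h1 : (D ∪ V) ∩ A = D := by
      rw [Finset.union_inter_distrib_right]
      have : V ∩ A = ∅ := Finset.eq_empty_of_forall_notMem fun a ha => by
        obtain ⟨haV, haA⟩ := Finset.mem_inter.1 ha
        exact (Finset.mem_sdiff.1 (hVS haV)).2 haA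
      rw [this, Finset.union_empty, Finset.inter_eq_left.2 hDA]
    have h2 : (D ∪ V) \ A = V := by
      rw [Finset.union_sdiff_distrib]
      have hD' : D \ A = ∅ := Finset.sdiff_eq_empty_iff_subset.2 hDA
      have hV' : V \ A = V := Finset.sdiff_eq_self_iff_disjoint.2
        (Finset.disjoint_left.2 fun a haV haA => (Finset.mem_sdiff.1 (hVS haV)).2 haA)
      rw [hD', hV', Finset.empty_union]
    refine Sigma.ext ?_ (heq_of_eq ?_)
    · simp only [h1, hD]
    · simp only [h1, h2]
  · intro B hB
    exact sup_inf_sdiff B A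
  · rintro ⟨k, D, V⟩ h; rfl

lemma ichoose_eq_zero {a b : ℕ} {k : ℕ} (h : min a b < k) :
    ichoose ((a:ℤ) + b - 2*k) ((a:ℤ) - k) = 0 := by
  rw [ichoose, if_neg]; omega

lemma ichoose_eq_choose {a b k : ℕ} (h : k ≤ min a b) :
    ichoose ((a:ℤ) + b - 2*k) ((a:ℤ) - k) = (a + b - 2*k).choose (a - k) := by
  rw [ichoose, if_pos (by omega)]
  have h1 : ((a:ℤ) + b - 2*k).toNat = a + b - 2*k := by omega
  have h2 : ((a:ℤ) - k).toNat = a - k := by omega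
  rw [h1, h2]

lemma core_sum (S : Finset ι) (y : ι → R) (a b : ℕ) {K : ℕ} (hK : min a b < K) :
    (∑ A ∈ S.powersetCard a, ∏ i ∈ A, y i) * (∑ B ∈ S.powersetCard b, ∏ i ∈ B, y i)
      = ∑ k ∈ Finset.range K, ((ichoose ((a:ℤ) + b - 2*k) ((a:ℤ) - k) : ℤ) : R) *
          ∑ D ∈ S.powersetCard k, ∑ E ∈ (S \ D).powersetCard (a + b - 2*k),
            (∏ i ∈ D, y i ^ 2) * ∏ i ∈ E, y i := by
  -- step 1: expand product of sums
  rw [Finset.sum_mul_sum]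
  -- step 2: decompose B over A
  have step2 : ∀ A ∈ S.powersetCard a,
      (∑ B ∈ S.powersetCard b, (∏ i ∈ A, y i) * ∏ i ∈ B, y i)
        = ∑ k ∈ Finset.range (b + 1), ∑ D ∈ A.powersetCard k,
            ∑ V ∈ (S \ A).powersetCard (b - k),
              (∏ i ∈ A, y i) * ((∏ i ∈ D, y i) * ∏ i ∈ V, y i) := by
    intro A hA
    obtain ⟨hAS, _⟩ := Finset.mem_powersetCard.1 hA
    rw [sum_pC_inter S A hAS b (fun B => (∏ i ∈ A, y i) * ∏ i ∈ B, y i)]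
    refine Finset.sum_congr rfl fun k _ => Finset.sum_congr rfl fun D hD =>
      Finset.sum_congr rfl fun V hV => ?_
    obtain ⟨hDA, _⟩ := Finset.mem_powersetCard.1 hD
    obtain ⟨hVS, _⟩ := Finset.mem_powersetCard.1 hV
    have hd : Disjoint D V := Finset.disjoint_left.2 fun x hxD hxV =>
      (Finset.mem_sdiff.1 (hVS hxV)).2 (hDA hxD)
    rw [Finset.prod_union hd]
  rw [Finset.sum_congr rfl step2, Finset.sum_comm]
  -- now: ∑ k ∈ range (b+1), T k  with
  -- T k = ∑ A ∑ D⊆A ∑ V ...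
  have key : ∀ k ∈ Finset.range (b + 1),
      (∑ A ∈ S.powersetCard a, ∑ D ∈ A.powersetCard k,
          ∑ V ∈ (S \ A).powersetCard (b - k),
            (∏ i ∈ A, y i) * ((∏ i ∈ D, y i) * ∏ i ∈ V, y i))
        = ((ichoose ((a:ℤ) + b - 2*k) ((a:ℤ) - k) : ℤ) : R) *
            ∑ D ∈ S.powersetCard k, ∑ E ∈ (S \ D).powersetCard (a + b - 2*k),
              (∏ i ∈ D, y i ^ 2) * ∏ i ∈ E, y i := by
    intro k hk
    rw [Finset.mem_range] at hk
    by_cases hka : k ≤ a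
    · -- rewrite the summand in terms of (D, A \ D)
      have h1 : ∀ A ∈ S.powersetCard a, (∑ D ∈ A.powersetCard k,
            ∑ V ∈ (S \ A).powersetCard (b - k),
              (∏ i ∈ A, y i) * ((∏ i ∈ D, y i) * ∏ i ∈ V, y i))
          = ∑ D ∈ A.powersetCard k,
              ∑ V ∈ ((S \ D) \ (A \ D)).powersetCard (b - k),
                (∏ i ∈ D, y i ^ 2) * ((∏ i ∈ A \ D, y i) * ∏ i ∈ V, y i) := by
        intro A hA
        obtain ⟨hAS, hAcard⟩ := Finset.mem_powersetCard.1 hA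
        refine Finset.sum_congr rfl fun D hD => ?_
        obtain ⟨hDA, hDcard⟩ := Finset.mem_powersetCard.1 hD
        have hSA : (S \ D) \ (A \ D) = S \ A := by
          ext x
          simp only [Finset.mem_sdiff]
          constructor
          · rintro ⟨⟨hxS, hxD⟩, hx⟩
            exact ⟨hxS, fun hxA => hx ⟨hxA, hxD⟩⟩
          · rintro ⟨hxS, hxA⟩
            exact ⟨⟨hxS, fun h => hxA (hDA h)⟩, fun h => hxA h.1⟩
        rw [hSA]
        refine Finset.sum_congr rfl fun V hV => ?_
        have hPA : (∏ i ∈ A, y i) = (∏ i ∈ D, y i) * ∏ i ∈ A \ D, y i := by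
          rw [← Finset.prod_sdiff hDA]; ring
        rw [hPA]; ring_nf
        rw [Finset.prod_pow]; ring
      rw [Finset.sum_congr rfl h1]
      -- now apply sum_pC_split in reverse with p = k, q = a - k (so p+q = a)
      have hpq : k + (a - k) = a := by omega
      have h2 := sum_pC_split S k (a - k) (fun D W =>
        ∑ V ∈ ((S \ D) \ W).powersetCard (b - k),
          (∏ i ∈ D, y i ^ 2) * ((∏ i ∈ W, y i) * ∏ i ∈ V, y i))
      rw [hpq] at h2
      rw [← h2]
      -- now inner double sum over W, V: apply sum_pC_split forward on T = S \ D
      have h3 : ∀ D ∈ S.powersetCard k,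
          (∑ W ∈ (S \ D).powersetCard (a - k),
              ∑ V ∈ ((S \ D) \ W).powersetCard (b - k),
                (∏ i ∈ D, y i ^ 2) * ((∏ i ∈ W, y i) * ∏ i ∈ V, y i))
            = ((a + b - 2*k).choose (a - k) : R) *
                ∑ E ∈ (S \ D).powersetCard (a + b - 2*k),
                  (∏ i ∈ D, y i ^ 2) * ∏ i ∈ E, y i := by
        intro D hD
        rw [sum_pC_split (S \ D) (a - k) (b - k) (fun W V =>
          (∏ i ∈ D, y i ^ 2) * ((∏ i ∈ W, y i) * ∏ i ∈ V, y i))]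
        have hab : a - k + (b - k) = a + b - 2*k := by omega
        rw [hab, Finset.mul_sum]
        refine Finset.sum_congr rfl fun E hE => ?_
        obtain ⟨hES, hEcard⟩ := Finset.mem_powersetCard.1 hE
        have h4 : ∀ U ∈ E.powersetCard (a - k),
            (∏ i ∈ D, y i ^ 2) * ((∏ i ∈ U, y i) * ∏ i ∈ E \ U, y i)
              = (∏ i ∈ D, y i ^ 2) * ∏ i ∈ E, y i := by
          intro U hU
          obtain ⟨hUE, _⟩ := Finset.mem_powersetCard.1 hU
          rw [← Finset.prod_sdiff hUE]; ring
        rw [Finset.sum_congr rfl h4, Finset.sum_const, Finset.card_powersetCard, hEcard,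
          nsmul_eq_mul]
      rw [Finset.sum_congr rfl h3, ← Finset.mul_sum, ichoose_eq_choose (by omega)]
      push_cast
      ring
    · -- k > a : both sides vanish
      have hz : ∀ A ∈ S.powersetCard a, (∑ D ∈ A.powersetCard k,
            ∑ V ∈ (S \ A).powersetCard (b - k),
              (∏ i ∈ A, y i) * ((∏ i ∈ D, y i) * ∏ i ∈ V, y i)) = 0 := by
        intro A hA
        obtain ⟨_, hAcard⟩ := Finset.mem_powersetCard.1 hA
        rw [Finset.powersetCard_eq_empty.2 (by omega), Finset.sum_empty]
      rw [Finset.sum_congr rfl hz, Finset.sum_const, smul_zero,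
        ichoose_eq_zero (by omega)]
      simp
  rw [Finset.sum_congr rfl key]
  -- extend / restrict the range: terms with min a b < k vanish
  have hvanish : ∀ (K' : ℕ), min a b < K' →
      (∑ k ∈ Finset.range K', ((ichoose ((a:ℤ) + b - 2*k) ((a:ℤ) - k) : ℤ) : R) *
          ∑ D ∈ S.powersetCard k, ∑ E ∈ (S \ D).powersetCard (a + b - 2*k),
            (∏ i ∈ D, y i ^ 2) * ∏ i ∈ E, y i)
        = ∑ k ∈ Finset.range (min a b + 1),
            ((ichoose ((a:ℤ) + b - 2*k) ((a:ℤ) - k) : ℤ) : R) *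
              ∑ D ∈ S.powersetCard k, ∑ E ∈ (S \ D).powersetCard (a + b - 2*k),
                (∏ i ∈ D, y i ^ 2) * ∏ i ∈ E, y i := by
    intro K' hK'
    refine (Finset.sum_subset (Finset.range_subset_range.2 (by omega)) ?_).symm
    intro k _ hk
    rw [Finset.mem_range, not_lt] at hk
    rw [ichoose_eq_zero (by omega)]
    simp
  rw [hvanish (b+1) (by omega), ← hvanish K hK]

lemma list_prod_sort_map (t : Finset ℕ) (h : ℕ → ℂ) :
    ((t.sort (· ≤ ·)).map h).prod = ∏ i ∈ t, h i := by
  rw [Finset.prod_eq_multiset_prod, ← Finset.sort_eq t (· ≤ ·), Multiset.map_coe,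
    Multiset.prod_coe]

lemma zipWith_replicate_len {α β γ : Type*} (f : α → β → γ) (e : β) :
    ∀ (l : List α), List.zipWith f l (List.replicate l.length e) = l.map (fun x => f x e)
  | [] => rfl
  | a :: l => by
      simp only [List.length_cons, List.replicate_succ, List.zipWith_cons_cons, List.map_cons,
        zipWith_replicate_len f e l]

lemma qhs_replicate (n p : ℕ) (e : ℤ) :
    qhs n (List.replicate p e)
      = ∑ t ∈ (Finset.Icc 1 (n-1)).powersetCard p, ∏ i ∈ t, (1 - zetaN n ^ i) ^ (-e) := by
  rw [qhs, List.length_replicate]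
  refine Finset.sum_congr rfl fun t ht => ?_
  obtain ⟨-, hcard⟩ := Finset.mem_powersetCard.1 ht
  have hlen : (t.sort (· ≤ ·)).length = p := by rw [Finset.length_sort, hcard]
  rw [← hlen, zipWith_replicate_len, list_prod_sort_map]

lemma exists_two_one_rep : ∀ (u : List ℕ) (σ : List ℤ), u.Nodup →
    σ.length = u.length → (∀ e ∈ σ, e = 1 ∨ e = 2) →
    ∃ D : Finset ℕ, D ⊆ u.toFinset ∧ D.card = σ.count 2 ∧
      σ = u.map (fun i => if i ∈ D then (2:ℤ) else 1)
  | [], σ, _, hlen, _ => by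
      rw [List.length_nil, List.length_eq_zero_iff] at hlen
      exact ⟨∅, by simp, by simp [hlen], by simp [hlen]⟩
  | i :: u, σ, hu, hlen, hσ => by
      match σ, hlen with
      | e :: σ', hlen => ?_
      rw [List.nodup_cons] at hu
      obtain ⟨hiu, hu'⟩ := hu
      simp only [List.length_cons, Nat.succ_inj] at hlen
      obtain ⟨D', hsub, hcard, hmap⟩ := exists_two_one_rep u σ' hu' hlen
        (fun e he => hσ e (List.mem_cons_of_mem _ he))
      have hiD' : i ∉ D' := fun h => hiu (List.mem_toFinset.1 (hsub h))
      rcases hσ e List.mem_cons_self with he | he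
      · refine ⟨D', hsub.trans ?_, ?_, ?_⟩
        · intro x hx; simp only [List.toFinset_cons, Finset.mem_insert]
          exact Or.inr hx
        · rw [he, hcard, List.count_cons]; norm_num
        · rw [List.map_cons, if_neg hiD', ← hmap, he]
      · refine ⟨insert i D', ?_, ?_, ?_⟩
        · intro x hx
          rcases Finset.mem_insert.1 hx with rfl | hx
          · simp
          · simp only [List.toFinset_cons, Finset.mem_insert]; exact Or.inr (hsub hx)
        · rw [Finset.card_insert_of_notMem hiD', hcard, he, List.count_cons]
          norm_num
        · rw [List.map_cons, if_pos (Finset.mem_insert_self i D'), he]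
          congr 1
          rw [hmap]
          refine List.map_congr_left fun j hj => ?_
          have hne : j ≠ i := fun h => hiu (h ▸ hj)
          simp [Finset.mem_insert, hne]

lemma Yperm_two_one (n b c : ℕ) :
    Yperm n (List.replicate b (2:ℤ) ++ List.replicate c 1)
      = ∑ D ∈ (Finset.Icc 1 (n-1)).powersetCard b,
          ∑ E ∈ ((Finset.Icc 1 (n-1)) \ D).powersetCard c,
            (∏ i ∈ D, ((1 - zetaN n ^ i)⁻¹) ^ 2) * ∏ i ∈ E, (1 - zetaN n ^ i)⁻¹ := by
  set S := Finset.Icc 1 (n-1) with hS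
  set L := List.replicate b (2:ℤ) ++ List.replicate c 1 with hL
  have hLlen : L.length = b + c := by simp [hL]
  have hmemL : ∀ e ∈ L, e = (1:ℤ) ∨ e = 2 := by
    intro e he
    rcases List.mem_append.1 he with h | h
    · exact Or.inr (List.eq_of_mem_replicate h)
    · exact Or.inl (List.eq_of_mem_replicate h)
  have hcountL : L.count 2 = b := by
    rw [hL, List.count_append, List.count_replicate, List.count_replicate]
    norm_num
  rw [Yperm]
  have step0 : ∀ σ ∈ L.permutations.toFinset, qhs n σ
      = ∑ t ∈ S.powersetCard (b+c),
          (List.zipWith (fun i e => (1 - zetaN n ^ i) ^ (-e)) (t.sort (· ≤ ·)) σ).prod := by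
    intro σ hσ
    have : σ.length = b + c := by
      rw [← hLlen]
      exact (List.mem_permutations.1 (List.mem_toFinset.1 hσ)).length_eq
    rw [qhs, this]
  rw [Finset.sum_congr rfl step0, Finset.sum_comm]
  have inner : ∀ t ∈ S.powersetCard (b+c),
      (∑ σ ∈ L.permutations.toFinset,
        (List.zipWith (fun i e => (1 - zetaN n ^ i) ^ (-e)) (t.sort (· ≤ ·)) σ).prod)
      = ∑ D ∈ t.powersetCard b,
          (∏ i ∈ D, ((1 - zetaN n ^ i)⁻¹) ^ 2) * ∏ i ∈ t \ D, (1 - zetaN n ^ i)⁻¹ := by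
    intro t ht
    obtain ⟨htS, htcard⟩ := Finset.mem_powersetCard.1 ht
    set u := t.sort (· ≤ ·) with hu
    have hunodup : u.Nodup := Finset.sort_nodup t _
    have hulen : u.length = b + c := by rw [hu, Finset.length_sort, htcard]
    have hutF : u.toFinset = t := Finset.sort_toFinset t _
    have humem : ∀ x, x ∈ u ↔ x ∈ t := fun x => Finset.mem_sort _
    refine (Finset.sum_bij (fun D _ => u.map (fun i => if i ∈ D then (2:ℤ) else 1))
      ?_ ?_ ?_ ?_).symm
    · -- maps into permutations
      intro D hD
      obtain ⟨hDt, hDcard⟩ := Finset.mem_powersetCard.1 hD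
      rw [List.mem_toFinset, List.mem_permutations, ← Multiset.coe_eq_coe]
      have ht1 : (t.1 : Multiset ℕ) = D.1 + (t \ D).1 := by
        have h1 : D.disjUnion (t \ D) Finset.disjoint_sdiff = t := by
          rw [Finset.disjUnion_eq_union, Finset.union_sdiff_of_subset hDt]
        conv_lhs => rw [← h1]
        rfl
      have hcoe : (↑(u.map (fun i => if i ∈ D then (2:ℤ) else 1)) : Multiset ℤ)
          = Multiset.map (fun i => if i ∈ D then (2:ℤ) else 1) t.1 := by
        rw [← Multiset.map_coe, hu, Finset.sort_eq]
      rw [hcoe, ht1, Multiset.map_add]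
      have hmap1 : Multiset.map (fun i => if i ∈ D then (2:ℤ) else 1) D.1
          = Multiset.replicate b 2 := by
        have h2 : Multiset.map (fun i => if i ∈ D then (2:ℤ) else 1) D.1
            = Multiset.map (fun _ => (2:ℤ)) D.1 :=
          Multiset.map_congr rfl fun x hx => if_pos (Finset.mem_def.2 hx)
        rw [h2, Multiset.map_const', ← Finset.card_def, hDcard]
      have hmap2 : Multiset.map (fun i => if i ∈ D then (2:ℤ) else 1) (t \ D).1
          = Multiset.replicate c 1 := by
        have h2 : Multiset.map (fun i => if i ∈ D then (2:ℤ) else 1) (t \ D).1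
            = Multiset.map (fun _ => (1:ℤ)) (t \ D).1 :=
          Multiset.map_congr rfl fun x hx =>
            if_neg (Finset.mem_sdiff.1 (Finset.mem_def.2 hx)).2
        have h3 : (t \ D).card = c := by rw [Finset.card_sdiff_of_subset hDt, htcard, hDcard]; omega
        rw [h2, Multiset.map_const', ← Finset.card_def, h3]
      rw [hmap1, hmap2, hL, ← Multiset.coe_add, Multiset.coe_replicate,
        Multiset.coe_replicate]
    · -- injective
      intro D₁ hD₁ D₂ hD₂ h
      obtain ⟨hD₁t, _⟩ := Finset.mem_powersetCard.1 hD₁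
      obtain ⟨hD₂t, _⟩ := Finset.mem_powersetCard.1 hD₂
      rw [List.map_inj_left] at h
      ext x
      by_cases hxt : x ∈ t
      · have := h x ((humem x).2 hxt)
        by_cases h1 : x ∈ D₁ <;> by_cases h2 : x ∈ D₂ <;>
          simp only [h1, h2, if_pos, if_neg, if_true, if_false] at this ⊢ <;> norm_num at this
      · constructor
        · intro h'; exact absurd (hD₁t h') hxt
        · intro h'; exact absurd (hD₂t h') hxt
    · -- surjective
      intro σ hσ
      have hperm := List.mem_permutations.1 (List.mem_toFinset.1 hσ)
      have hlen : σ.length = u.length := by rw [hperm.length_eq, hLlen, hulen]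
      have hmem : ∀ e ∈ σ, e = (1:ℤ) ∨ e = 2 := fun e he => hmemL e (hperm.mem_iff.1 he)
      obtain ⟨D, hsub, hcard, hmap⟩ := exists_two_one_rep u σ hunodup hlen hmem
      refine ⟨D, Finset.mem_powersetCard.2 ⟨hutF ▸ hsub, ?_⟩, hmap.symm⟩
      rw [hcard, hperm.count_eq, hcountL]
    · -- value
      intro D hD
      obtain ⟨hDt, hDcard⟩ := Finset.mem_powersetCard.1 hD
      rw [List.zipWith_map_right, List.zipWith_self, list_prod_sort_map]
      rw [← Finset.prod_sdiff hDt, mul_comm ((∏ i ∈ D, ((1 - zetaN n ^ i)⁻¹) ^ 2))]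
      congr 1
      · refine Finset.prod_congr rfl fun x hx => ?_
        rw [if_neg (Finset.mem_sdiff.1 hx).2, zpow_neg_one]
      · refine Finset.prod_congr rfl fun x hx => ?_
        rw [if_pos hx, zpow_neg, zpow_two, inv_pow, pow_two]
  rw [Finset.sum_congr rfl inner]
  exact (sum_pC_split S b c (fun D E =>
    (∏ i ∈ D, ((1 - zetaN n ^ i)⁻¹) ^ 2) * ∏ i ∈ E, (1 - zetaN n ^ i)⁻¹)).symm

lemma zetaN_prim (n : ℕ) (hn : 2 ≤ n) : IsPrimitiveRoot (zetaN n) n := by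
  rw [zetaN]; exact Complex.isPrimitiveRoot_exp n (by omega)

lemma one_sub_zetaN_ne (n : ℕ) (hn : 2 ≤ n) {i : ℕ} (hi : i ∈ Finset.Icc 1 (n-1)) :
    1 - zetaN n ^ i ≠ 0 := by
  rw [Finset.mem_Icc] at hi
  have h := (zetaN_prim n hn).pow_ne_one_of_pos_of_lt (by omega : i ≠ 0) (by omega : i < n)
  exact sub_ne_zero.2 fun h' => h h'.symm

lemma prod_one_sub_zetaN (n : ℕ) (hn : 2 ≤ n) :
    ∏ i ∈ Finset.Icc 1 (n-1), (1 - zetaN n ^ i) = n := by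
  have hp : IsPrimitiveRoot (zetaN n) ((n - 1) + 1) := by
    rw [show (n - 1) + 1 = n by omega]; exact zetaN_prim n hn
  have h := hp.prod_one_sub_pow_eq_order
  have hIcc : Finset.Icc 1 (n-1) = Finset.Ico 1 n := by
    rw [← Finset.Ico_add_one_right_eq_Icc, show n - 1 + 1 = n by omega]
  rw [hIcc, Finset.prod_Ico_eq_prod_range]
  rw [show n - 1 = n - 1 by rfl] at h
  calc ∏ i ∈ Finset.range (n - 1), (1 - zetaN n ^ (1 + i))
      = ∏ i ∈ Finset.range (n - 1), (1 - zetaN n ^ (i + 1)) := by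
        refine Finset.prod_congr rfl fun i _ => by rw [add_comm]
    _ = ((n : ℂ) - 1) + 1 := by rw [h]; push_cast [show (1:ℕ) ≤ n by omega]; ring
    _ = (n : ℂ) := by ring

theorem stmt3 (n m ℓ : ℕ) (hn : 2 ≤ n) (hm : m ≤ n - 1) (hℓ : ℓ ≤ m) :
    qhs n (List.replicate m 1) * qhs n (List.replicate ℓ (-1))
      = ((n - m + ℓ - 1).choose (n - m - 1) : ℂ) * qhs n (List.replicate (m - ℓ) 1)
        + (n : ℂ) * ∑ j ∈ Finset.range (n - m - 1),
            (ichoose ((n : ℤ) - m + ℓ - 3 - 2 * j) ((ℓ : ℤ) - 1 - j) : ℂ) *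
              Y3 n 0 ((m : ℤ) - ℓ + 1 + j) ((n : ℤ) - m + ℓ - 3 - 2 * j) := by
  have hmN : m ≤ n - 1 := hm
  set N := n - 1 with hN
  set S := Finset.Icc 1 (n-1) with hS
  set y : ℕ → ℂ := fun i => (1 - zetaN n ^ i)⁻¹ with hy
  have hcardS : S.card = N := by rw [hS, Nat.card_Icc]; omega
  have hx : ∀ i ∈ S, (1 - zetaN n ^ i) ≠ 0 := fun i hi => one_sub_zetaN_ne n hn hi
  have hprodx : ∏ i ∈ S, (1 - zetaN n ^ i) = n := prod_one_sub_zetaN n hn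
  have hprody : (n:ℂ) * ∏ i ∈ S, y i = 1 := by
    rw [← hprodx, ← Finset.prod_mul_distrib,
      Finset.prod_congr rfl (fun i hi => mul_inv_cancel₀ (hx i hi))]
    exact Finset.prod_const_one
  -- first factor
  have hq1 : ∀ p : ℕ, qhs n (List.replicate p 1)
      = ∑ A ∈ S.powersetCard p, ∏ i ∈ A, y i := by
    intro p
    rw [qhs_replicate]
    exact Finset.sum_congr rfl fun t _ => Finset.prod_congr rfl fun i _ => by
      rw [zpow_neg, zpow_one]
  -- second factor
  have hq2 : qhs n (List.replicate ℓ (-1))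
      = (n:ℂ) * ∑ C ∈ S.powersetCard (N - ℓ), ∏ i ∈ C, y i := by
    rw [qhs_replicate]
    have h0 : ∀ t ∈ S.powersetCard ℓ,
        (∏ i ∈ t, (1 - zetaN n ^ i) ^ (-(-1:ℤ))) = (n:ℂ) * ∏ i ∈ S \ t, y i := by
      intro t ht
      obtain ⟨htS, htc⟩ := Finset.mem_powersetCard.1 ht
      have h1 : (∏ i ∈ t, (1 - zetaN n ^ i) ^ (-(-1:ℤ))) = ∏ i ∈ t, (1 - zetaN n ^ i) :=
        Finset.prod_congr rfl fun i _ => by rw [neg_neg, zpow_one]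
      have h2 : (∏ i ∈ S \ t, (1 - zetaN n ^ i)) * (∏ i ∈ S \ t, y i) = 1 := by
        rw [← Finset.prod_mul_distrib, Finset.prod_congr rfl
          (fun i hi => mul_inv_cancel₀ (hx i (Finset.mem_sdiff.1 hi).1))]
        exact Finset.prod_const_one
      rw [h1]
      calc ∏ i ∈ t, (1 - zetaN n ^ i)
          = (∏ i ∈ t, (1 - zetaN n ^ i)) *
              ((∏ i ∈ S \ t, (1 - zetaN n ^ i)) * ∏ i ∈ S \ t, y i) := by rw [h2, mul_one]
        _ = ((∏ i ∈ S \ t, (1 - zetaN n ^ i)) * (∏ i ∈ t, (1 - zetaN n ^ i))) *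
              ∏ i ∈ S \ t, y i := by ring
        _ = (n:ℂ) * ∏ i ∈ S \ t, y i := by rw [Finset.prod_sdiff htS, hprodx]
    rw [Finset.sum_congr rfl h0, ← Finset.mul_sum]
    congr 1
    refine Finset.sum_nbij' (fun t => S \ t) (fun C => S \ C) ?_ ?_ ?_ ?_ ?_
    · intro t ht
      obtain ⟨htS, htc⟩ := Finset.mem_powersetCard.1 ht
      exact Finset.mem_powersetCard.2 ⟨Finset.sdiff_subset,
        by rw [Finset.card_sdiff_of_subset htS, hcardS, htc]⟩
    · intro C hC
      obtain ⟨hCS, hCc⟩ := Finset.mem_powersetCard.1 hC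
      refine Finset.mem_powersetCard.2 ⟨Finset.sdiff_subset, ?_⟩
      rw [Finset.card_sdiff_of_subset hCS, hcardS, hCc]
      omega
    · intro t ht
      exact Finset.sdiff_sdiff_eq_self (Finset.mem_powersetCard.1 ht).1
    · intro C hC
      exact Finset.sdiff_sdiff_eq_self (Finset.mem_powersetCard.1 hC).1
    · intro t ht; rfl
  rw [hq1 m, hq2, mul_left_comm,
    core_sum S y m (N - ℓ) (K := (m - ℓ + 1) + (N - m)) (by omega),
    Finset.sum_range_add, mul_add]
  congr 1
  · -- initial chunk: k from 0 to m - ℓ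
    rw [Finset.sum_range_succ]
    have hzero : ∑ k ∈ Finset.range (m - ℓ),
        ((ichoose ((m:ℤ) + ((N - ℓ : ℕ) : ℤ) - 2*k) ((m:ℤ) - k) : ℤ) : ℂ) *
          ∑ D ∈ S.powersetCard k, ∑ E ∈ (S \ D).powersetCard (m + (N - ℓ) - 2*k),
            (∏ i ∈ D, y i ^ 2) * ∏ i ∈ E, y i = 0 := by
      refine Finset.sum_eq_zero fun k hk => ?_
      rw [Finset.mem_range] at hk
      have hD0 : ∀ D ∈ S.powersetCard k,
          (∑ E ∈ (S \ D).powersetCard (m + (N - ℓ) - 2*k),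
            (∏ i ∈ D, y i ^ 2) * ∏ i ∈ E, y i) = 0 := by
        intro D hD
        obtain ⟨hDS, hDc⟩ := Finset.mem_powersetCard.1 hD
        rw [Finset.powersetCard_eq_empty.2 ?_, Finset.sum_empty]
        rw [Finset.card_sdiff_of_subset hDS, hcardS, hDc]
        omega
      rw [Finset.sum_congr rfl hD0, Finset.sum_const, smul_zero, mul_zero]
    rw [hzero, zero_add]
    -- the k = m - ℓ term
    have hich : ((ichoose ((m:ℤ) + ((N - ℓ : ℕ) : ℤ) - 2*((m - ℓ : ℕ) : ℤ))
            ((m:ℤ) - ((m - ℓ : ℕ) : ℤ)) : ℤ) : ℂ)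
        = ((n - m + ℓ - 1).choose (n - m - 1) : ℂ) := by
      rw [ichoose, if_pos (by omega)]
      have e1 : ((m:ℤ) + ((N - ℓ : ℕ) : ℤ) - 2*((m - ℓ : ℕ) : ℤ)).toNat = N - m + ℓ := by omega
      have e2 : ((m:ℤ) - ((m - ℓ : ℕ) : ℤ)).toNat = ℓ := by omega
      rw [e1, e2]
      have e3 : n - m + ℓ - 1 = N - m + ℓ := by omega
      have e4 : n - m - 1 = N - m := by omega
      rw [e3, e4]
      have e5 : (N - m + ℓ).choose ℓ = (N - m + ℓ).choose (N - m) := by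
        rw [← Nat.choose_symm (show ℓ ≤ N - m + ℓ by omega)]
        congr 1
        omega
      rw [e5]
      norm_cast
    have hME : ∀ D ∈ S.powersetCard (m - ℓ),
        (∑ E ∈ (S \ D).powersetCard (m + (N - ℓ) - 2*(m - ℓ)),
          (∏ i ∈ D, y i ^ 2) * ∏ i ∈ E, y i)
        = (∏ i ∈ S, y i) * ∏ i ∈ D, y i := by
      intro D hD
      obtain ⟨hDS, hDc⟩ := Finset.mem_powersetCard.1 hD
      have hcs : (S \ D).card = m + (N - ℓ) - 2*(m - ℓ) := by
        rw [Finset.card_sdiff_of_subset hDS, hcardS, hDc]; omega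
      rw [← hcs, Finset.powersetCard_self, Finset.sum_singleton]
      have : (∏ i ∈ D, y i ^ 2) = (∏ i ∈ D, y i) * ∏ i ∈ D, y i := by
        rw [← Finset.prod_mul_distrib]
        exact Finset.prod_congr rfl fun i _ => sq (y i)
      calc (∏ i ∈ D, y i ^ 2) * ∏ i ∈ S \ D, y i
          = ((∏ i ∈ D, y i) * ∏ i ∈ D, y i) * ∏ i ∈ S \ D, y i := by rw [this]
        _ = ((∏ i ∈ S \ D, y i) * ∏ i ∈ D, y i) * ∏ i ∈ D, y i := by ring
        _ = (∏ i ∈ S, y i) * ∏ i ∈ D, y i := by rw [Finset.prod_sdiff hDS]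
    rw [Finset.sum_congr rfl hME, ← Finset.mul_sum, hich, ← hq1 (m - ℓ)]
    have hfin : ∀ (Cc Q P : ℂ), (n:ℂ) * P = 1 →
        (n:ℂ) * (Cc * (P * Q)) = Cc * Q := by
      intro Cc Q P hP
      calc (n:ℂ) * (Cc * (P * Q)) = ((n:ℂ) * P) * (Cc * Q) := by ring
        _ = Cc * Q := by rw [hP, one_mul]
    exact hfin _ _ _ hprody
  · -- the j-sum
    rw [show n - m - 1 = N - m by omega]
    congr 1
    refine Finset.sum_congr rfl fun j hj => ?_
    rw [Finset.mem_range] at hj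
    have h1 : ((m:ℤ) + ((N - ℓ : ℕ) : ℤ) - 2*((m - ℓ + 1 + j : ℕ) : ℤ))
        = (n:ℤ) - m + ℓ - 3 - 2*j := by omega
    have h2 : ((m:ℤ) - ((m - ℓ + 1 + j : ℕ) : ℤ)) = (ℓ:ℤ) - 1 - j := by omega
    rw [h1, h2]
    by_cases hich : ichoose ((n:ℤ) - m + ℓ - 3 - 2*j) ((ℓ:ℤ) - 1 - j) = 0
    · rw [hich]; norm_num
    · have hcond : 0 ≤ (ℓ:ℤ) - 1 - j ∧ (ℓ:ℤ) - 1 - j ≤ (n:ℤ) - m + ℓ - 3 - 2*j := by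
        by_contra hc
        exact hich (by rw [ichoose, if_neg hc])
      congr 1
      rw [Y3, if_pos ⟨le_refl 0, by omega, by omega⟩]
      have e0 : (0:ℤ).toNat = 0 := rfl
      have e1 : ((m:ℤ) - ℓ + 1 + j).toNat = m - ℓ + 1 + j := by omega
      have e2 : ((n:ℤ) - m + ℓ - 3 - 2*j).toNat = m + (N - ℓ) - 2*(m - ℓ + 1 + j) := by omega
      rw [e0, e1, e2, List.replicate_zero, List.nil_append, Yperm_two_one]
end

section
/- Let n, m, ℓ be positive integers with n ≥ 2 and m ≥ ℓ. Then 𝔷_n(1,…,1) (m entries) · 𝔷_n(1,…,1) (ℓ entries) = Σ_{j=0}^{n−m−1} C(m−ℓ+2j, j) · 𝒴_n(2^{ℓ−j}, 1^{m−ℓ+2j}). -/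
open Finset

open Finset

lemma zipWith_rep_right {α γ : Type*} (f : α → ℤ → γ) (a : ℤ) :
    ∀ l : List α, List.zipWith f l (List.replicate l.length a) = l.map (fun i => f i a) := by
  intro l; induction l with
  | nil => rfl
  | cons i l ih => simp [List.replicate_succ, ih]

/-- indicator map of a subset of a nodup list is a permutation of 2^k 1^c. -/
lemma map_ind_perm : ∀ (l : List ℕ), l.Nodup → ∀ T : Finset ℕ, T ⊆ l.toFinset →
    List.Perm (l.map (fun i => if i ∈ T then (2:ℤ) else 1))
      (List.replicate T.card 2 ++ List.replicate (l.length - T.card) 1) := by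
  intro l
  induction l with
  | nil =>
    intro _ T hT
    have : T = ∅ := by
      apply Finset.eq_empty_of_forall_notMem
      intro x hx; simpa using hT hx
    simp [this]
  | cons i l ih =>
    intro hnd T hT
    have hil : i ∉ l := (List.nodup_cons.mp hnd).1
    have hndl : l.Nodup := (List.nodup_cons.mp hnd).2
    by_cases hi : i ∈ T
    · have hT' : T.erase i ⊆ l.toFinset := by
        intro a ha
        have hai : a ≠ i := Finset.ne_of_mem_erase ha
        have := hT (Finset.mem_of_mem_erase ha)
        simp only [List.toFinset_cons, Finset.mem_insert] at this
        rcases this with h | h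
        · exact absurd h hai
        · exact h
      have hmap : l.map (fun i => if i ∈ T then (2:ℤ) else 1)
          = l.map (fun j => if j ∈ T.erase i then (2:ℤ) else 1) := by
        rw [List.map_inj_left]
        intro a ha
        have hai : a ≠ i := fun h => hil (h ▸ ha)
        simp [Finset.mem_erase, hai]
      have hcard : T.card = (T.erase i).card + 1 := by
        rw [Finset.card_erase_of_mem hi]
        have : 1 ≤ T.card := Finset.card_pos.mpr ⟨i, hi⟩
        omega
      have hle : (T.erase i).card ≤ l.length :=
        le_trans (Finset.card_le_card hT') (List.toFinset_card_le l)
      have harith : (i :: l).length - ((T.erase i).card + 1) = l.length - (T.erase i).card := by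
        simp only [List.length_cons]; omega
      rw [List.map_cons, if_pos hi, hmap, hcard, harith, List.replicate_succ, List.cons_append]
      exact (ih hndl (T.erase i) hT').cons 2
    · have hT' : T ⊆ l.toFinset := by
        intro a ha
        have := hT ha
        simp only [List.toFinset_cons, Finset.mem_insert] at this
        rcases this with h | h
        · exact absurd (h ▸ ha) hi
        · exact h
      have hle : T.card ≤ l.length :=
        le_trans (Finset.card_le_card hT') (List.toFinset_card_le l)
      have harith : (i :: l).length - T.card = (l.length - T.card) + 1 := by
        simp only [List.length_cons]; omega
      rw [List.map_cons, if_neg hi, harith, List.replicate_succ]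
      exact ((ih hndl T hT').cons 1).trans List.perm_middle.symm

/-- every {1,2}-valued list of the right length arises from a subset. -/
lemma exists_ind : ∀ (l : List ℕ), l.Nodup → ∀ σ : List ℤ, σ.length = l.length →
    (∀ e ∈ σ, e = 2 ∨ e = 1) →
    ∃ T : Finset ℕ, T ⊆ l.toFinset ∧ T.card = σ.count 2 ∧
      σ = l.map (fun i => if i ∈ T then (2:ℤ) else 1) := by
  intro l
  induction l with
  | nil =>
    intro _ σ hlen _
    refine ⟨∅, by simp, ?_, ?_⟩ <;> simp [List.length_eq_zero_iff.mp hlen]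
  | cons i l ih =>
    intro hnd σ hlen hmem
    have hil : i ∉ l := (List.nodup_cons.mp hnd).1
    have hndl : l.Nodup := (List.nodup_cons.mp hnd).2
    match σ with
    | [] => simp at hlen
    | e :: σ' =>
      have hlen' : σ'.length = l.length := by simpa using hlen
      obtain ⟨T', hT'sub, hT'card, hT'eq⟩ := ih hndl σ' hlen'
        (fun x hx => hmem x (List.mem_cons_of_mem _ hx))
      have hiT' : i ∉ T' := fun h => hil (List.mem_toFinset.mp (hT'sub h))
      have hmapeq : l.map (fun j => if j ∈ T' then (2:ℤ) else 1)
          = l.map (fun j => if j ∈ insert i T' then (2:ℤ) else 1) := by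
        rw [List.map_inj_left]
        intro a ha
        have hai : a ≠ i := fun h => hil (h ▸ ha)
        simp [Finset.mem_insert, hai]
      rcases hmem e List.mem_cons_self with he | he
      · refine ⟨insert i T', ?_, ?_, ?_⟩
        · intro a ha
          rcases Finset.mem_insert.mp ha with h | h
          · simp [h]
          · simp [List.mem_toFinset.mp (hT'sub h), List.toFinset_cons]
        · rw [Finset.card_insert_of_notMem hiT', hT'card, he]
          simp [List.count_cons]
        · rw [List.map_cons, if_pos (Finset.mem_insert_self i T'), ← hmapeq, ← hT'eq, he]
      · refine ⟨T', fun a ha => by simp [List.mem_toFinset.mp (hT'sub ha), List.toFinset_cons], ?_, ?_⟩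
        · rw [hT'card, he]; simp [List.count_cons]
        · rw [List.map_cons, if_neg hiT', ← hT'eq, he]

open Finset

lemma perm_sum (y : ℕ → ℂ) (l : List ℕ) (hnd : l.Nodup) (k c : ℕ) (hlen : l.length = k + c) :
    ∑ σ ∈ (List.replicate k (2:ℤ) ++ List.replicate c 1).permutations.toFinset,
      (List.zipWith (fun i e => y i ^ (-e)) l σ).prod
    = ∑ T ∈ l.toFinset.powersetCard k,
        (∏ i ∈ T, y i ^ (-2:ℤ)) * ∏ i ∈ l.toFinset \ T, y i ^ (-1:ℤ) := by
  symm
  apply Finset.sum_bij (fun T _ => l.map (fun i => if i ∈ T then (2:ℤ) else 1))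
  · -- membership
    intro T hT
    obtain ⟨hsub, hcard⟩ := Finset.mem_powersetCard.mp hT
    rw [List.mem_toFinset, List.mem_permutations]
    have := map_ind_perm l hnd T hsub
    rwa [hcard, hlen, Nat.add_sub_cancel_left] at this
  · -- injective
    intro T₁ h₁ T₂ h₂ heq
    obtain ⟨hsub₁, _⟩ := Finset.mem_powersetCard.mp h₁
    obtain ⟨hsub₂, _⟩ := Finset.mem_powersetCard.mp h₂
    rw [List.map_inj_left] at heq
    ext a
    constructor
    · intro ha
      have hal : a ∈ l := List.mem_toFinset.mp (hsub₁ ha)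
      have := heq a hal
      by_contra hna
      rw [if_pos ha, if_neg hna] at this
      norm_num at this
    · intro ha
      have hal : a ∈ l := List.mem_toFinset.mp (hsub₂ ha)
      have := heq a hal
      by_contra hna
      rw [if_neg hna, if_pos ha] at this
      norm_num at this
  · -- surjective
    intro σ hσ
    rw [List.mem_toFinset, List.mem_permutations] at hσ
    have hlenσ : σ.length = l.length := by
      rw [hσ.length_eq]; simp [hlen]
    have hmemσ : ∀ e ∈ σ, e = 2 ∨ e = 1 := by
      intro e he
      have := hσ.mem_iff.mp he
      rw [List.mem_append, List.mem_replicate, List.mem_replicate] at this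
      tauto
    obtain ⟨T, hsub, hcard, heq⟩ := exists_ind l hnd σ hlenσ hmemσ
    have hcnt : σ.count 2 = k := by
      rw [hσ.count_eq]
      simp [List.count_append, List.count_replicate]
    exact ⟨T, Finset.mem_powersetCard.mpr ⟨hsub, by rw [hcard, hcnt]⟩, heq.symm⟩
  · -- value
    intro T hT
    obtain ⟨hsub, hcard⟩ := Finset.mem_powersetCard.mp hT
    rw [List.zipWith_map_right, List.zipWith_self]
    have : (fun i => y i ^ (-(if i ∈ T then (2:ℤ) else 1)))
        = fun i => if i ∈ T then y i ^ (-2:ℤ) else y i ^ (-1:ℤ) := by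
      funext i
      by_cases h : i ∈ T <;> simp [h]
    rw [this, ← List.prod_toFinset _ hnd, Finset.prod_ite,
      Finset.filter_mem_eq_inter, Finset.inter_eq_right.mpr hsub, ← Finset.sdiff_eq_filter]

lemma g1_mul_g1 (x : ℂ) : x ^ (-1:ℤ) * x ^ (-1:ℤ) = x ^ (-2:ℤ) := by
  by_cases h : x = 0
  · simp [h, zero_zpow]
  · rw [← zpow_add₀ h]; norm_num

lemma claim1 (y : ℕ → ℂ) (S : Finset ℕ) (m ℓ : ℕ) (hml : ℓ ≤ m) :
    (∑ A ∈ S.powersetCard m, ∏ i ∈ A, y i ^ (-1:ℤ)) *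
      (∑ B ∈ S.powersetCard ℓ, ∏ i ∈ B, y i ^ (-1:ℤ))
    = ∑ k ∈ Finset.range (ℓ+1), ((m+ℓ-2*k).choose (m-k) : ℂ) *
        ∑ t ∈ S.powersetCard (m+ℓ-k), ∑ T ∈ t.powersetCard k,
          (∏ i ∈ T, y i ^ (-2:ℤ)) * ∏ i ∈ t \ T, y i ^ (-1:ℤ) := by
  rw [Finset.sum_mul_sum, ← Finset.sum_product']
  have key : ∑ p ∈ S.powersetCard m ×ˢ S.powersetCard ℓ,
        (∏ i ∈ p.1, y i ^ (-1:ℤ)) * ∏ i ∈ p.2, y i ^ (-1:ℤ)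
      = ∑ q ∈ (Finset.range (ℓ+1)).sigma (fun k => (S.powersetCard (m+ℓ-k)).sigma
            (fun t => (t.powersetCard k).sigma (fun T => (t \ T).powersetCard (m-k)))),
          (∏ i ∈ q.2.2.1, y i ^ (-2:ℤ)) * ∏ i ∈ q.2.1 \ q.2.2.1, y i ^ (-1:ℤ) := by
    apply Finset.sum_nbij'
      (i := fun p => ⟨(p.1 ∩ p.2).card, p.1 ∪ p.2, p.1 ∩ p.2, p.1 \ p.2⟩)
      (j := fun q => (q.2.2.1 ∪ q.2.2.2, q.2.1 \ q.2.2.2))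
    · -- forward membership
      rintro ⟨A, B⟩ hp
      simp only [Finset.mem_product] at hp
      obtain ⟨hA, hB⟩ := hp
      obtain ⟨hAS, hAc⟩ := Finset.mem_powersetCard.mp hA
      obtain ⟨hBS, hBc⟩ := Finset.mem_powersetCard.mp hB
      have h1 := Finset.card_union_add_card_inter A B
      have h2 := Finset.card_inter_add_card_sdiff A B
      have hk : (A ∩ B).card ≤ ℓ := hBc ▸ Finset.card_le_card Finset.inter_subset_right
      simp only [Finset.mem_sigma, Finset.mem_range, Finset.mem_powersetCard]
      refine ⟨by omega, ⟨Finset.union_subset hAS hBS, by omega⟩,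
        ⟨Finset.inter_subset_left.trans Finset.subset_union_left, trivial⟩, ?_, ?_⟩
      · intro x hx
        rw [Finset.mem_sdiff] at hx ⊢
        exact ⟨Finset.mem_union_left _ hx.1, fun hxi => hx.2 (Finset.mem_inter.mp hxi).2⟩
      · omega
    · -- backward membership
      rintro ⟨k, t, T, C⟩ hq
      simp only [Finset.mem_sigma, Finset.mem_range, Finset.mem_powersetCard] at hq
      obtain ⟨hk, ⟨htS, htc⟩, ⟨hTt, hTc⟩, hCtT, hCc⟩ := hq
      have hCt : C ⊆ t := hCtT.trans (Finset.sdiff_subset)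
      have hdisj : Disjoint T C := Finset.disjoint_left.mpr
        (fun a ha hb => (Finset.mem_sdiff.mp (hCtT hb)).2 ha)
      rw [Finset.mem_product]
      constructor
      · rw [Finset.mem_powersetCard]
        refine ⟨Finset.union_subset (hTt.trans htS) (hCt.trans htS), ?_⟩
        rw [Finset.card_union_of_disjoint hdisj, hTc, hCc]; omega
      · rw [Finset.mem_powersetCard]
        refine ⟨(Finset.sdiff_subset).trans htS, ?_⟩
        rw [Finset.card_sdiff_of_subset hCt, htc, hCc]; omega
    · -- left inverse
      rintro ⟨A, B⟩ hp
      have h1 : (A ∩ B) ∪ (A \ B) = A := by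
        ext x; simp only [Finset.mem_union, Finset.mem_inter, Finset.mem_sdiff]; tauto
      have h2 : (A ∪ B) \ (A \ B) = B := by
        ext x; simp only [Finset.mem_union, Finset.mem_sdiff]; tauto
      simp only [h1, h2]
    · -- right inverse
      rintro ⟨k, t, T, C⟩ hq
      simp only [Finset.mem_sigma, Finset.mem_range, Finset.mem_powersetCard] at hq
      obtain ⟨hk, ⟨htS, htc⟩, ⟨hTt, hTc⟩, hCtT, hCc⟩ := hq
      have hTx : ∀ x, x ∈ T → x ∈ t := fun x hx => hTt hx
      have hCx : ∀ x, x ∈ C → x ∈ t ∧ x ∉ T := fun x hx => Finset.mem_sdiff.mp (hCtT hx)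
      have e1 : (T ∪ C) ∩ (t \ C) = T := by
        ext x
        have := hTx x; have := hCx x
        simp only [Finset.mem_inter, Finset.mem_union, Finset.mem_sdiff]; tauto
      have e2 : (T ∪ C) ∪ (t \ C) = t := by
        ext x
        have := hTx x; have := hCx x
        simp only [Finset.mem_union, Finset.mem_sdiff]; tauto
      have e3 : (T ∪ C) \ (t \ C) = C := by
        ext x
        have := hTx x; have := hCx x
        simp only [Finset.mem_union, Finset.mem_sdiff]; tauto
      simp only [e1, e2, e3, hTc]
    · -- values
      rintro ⟨A, B⟩ hp
      have hsub : A ∩ B ⊆ A ∪ B := Finset.inter_subset_left.trans Finset.subset_union_left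
      dsimp only
      rw [← Finset.prod_union_inter, ← Finset.prod_sdiff hsub, mul_assoc,
        ← Finset.prod_mul_distrib,
        Finset.prod_congr rfl (fun i _ => g1_mul_g1 (y i)), mul_comm]
  rw [key, Finset.sum_sigma]
  apply Finset.sum_congr rfl
  intro k hk
  rw [Finset.mem_range] at hk
  rw [Finset.sum_sigma, Finset.mul_sum]
  apply Finset.sum_congr rfl
  intro t ht
  have htc : t.card = m + ℓ - k := (Finset.mem_powersetCard.mp ht).2
  rw [Finset.sum_sigma, Finset.mul_sum]
  apply Finset.sum_congr rfl
  intro T hT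
  obtain ⟨hTt, hTc⟩ := Finset.mem_powersetCard.mp hT
  dsimp only
  rw [Finset.sum_const, Finset.card_powersetCard, Finset.card_sdiff_of_subset hTt, htc, hTc,
    show m + ℓ - k - k = m + ℓ - 2*k by omega, nsmul_eq_mul]

lemma qhs_rep (n m : ℕ) : qhs n (List.replicate m (1:ℤ))
    = ∑ t ∈ (Finset.Icc 1 (n-1)).powersetCard m,
        ∏ i ∈ t, (1 - zetaN n ^ i) ^ (-1:ℤ) := by
  unfold qhs
  rw [List.length_replicate]
  apply Finset.sum_congr rfl
  intro t ht
  have hcard : t.card = m := (Finset.mem_powersetCard.mp ht).2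
  have hlen : (t.sort (· ≤ ·)).length = m := by rw [Finset.length_sort, hcard]
  rw [← hlen, zipWith_rep_right, ← List.prod_toFinset _ (Finset.sort_nodup (s := t) (r := (· ≤ ·))),
    Finset.sort_toFinset]

lemma Yperm_eval (n k c : ℕ) :
    Yperm n (List.replicate k (2:ℤ) ++ List.replicate c 1)
    = ∑ t ∈ (Finset.Icc 1 (n-1)).powersetCard (k+c), ∑ T ∈ t.powersetCard k,
        (∏ i ∈ T, (1 - zetaN n ^ i) ^ (-2:ℤ)) * ∏ i ∈ t \ T, (1 - zetaN n ^ i) ^ (-1:ℤ) := by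
  unfold Yperm
  have step : ∀ σ ∈ (List.replicate k (2:ℤ) ++ List.replicate c 1).permutations.toFinset,
      qhs n σ = ∑ t ∈ (Finset.Icc 1 (n-1)).powersetCard (k+c),
        (List.zipWith (fun i e => (1 - zetaN n ^ i) ^ (-e)) (t.sort (· ≤ ·)) σ).prod := by
    intro σ hσ
    rw [List.mem_toFinset, List.mem_permutations] at hσ
    unfold qhs
    rw [hσ.length_eq]
    simp
  rw [Finset.sum_congr rfl step, Finset.sum_comm]
  apply Finset.sum_congr rfl
  intro t ht
  have hcard : t.card = k + c := (Finset.mem_powersetCard.mp ht).2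
  have hlen : (t.sort (· ≤ ·)).length = k + c := by rw [Finset.length_sort, hcard]
  have := perm_sum (fun i => 1 - zetaN n ^ i) (t.sort (· ≤ ·)) (Finset.sort_nodup (s := t) (r := (· ≤ ·))) k c hlen
  rwa [Finset.sort_toFinset] at this

lemma Y3_eval (n m ℓ j : ℕ) (hml : ℓ ≤ m) (hj : j ≤ ℓ) :
    Y3 n 0 ((ℓ:ℤ) - j) ((m:ℤ) - ℓ + 2*j)
    = ∑ t ∈ (Finset.Icc 1 (n-1)).powersetCard ((ℓ-j) + (m-ℓ+2*j)),
        ∑ T ∈ t.powersetCard (ℓ-j),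
          (∏ i ∈ T, (1 - zetaN n ^ i) ^ (-2:ℤ)) * ∏ i ∈ t \ T, (1 - zetaN n ^ i) ^ (-1:ℤ) := by
  unfold Y3
  rw [if_pos ⟨le_refl 0, by omega, by omega⟩]
  have h1 : ((ℓ:ℤ) - j).toNat = ℓ - j := by omega
  have h2 : ((m:ℤ) - ℓ + 2*j).toNat = m - ℓ + 2*j := by omega
  have h0 : (0:ℤ).toNat = 0 := rfl
  rw [h0, h1, h2, List.replicate_zero, List.nil_append, Yperm_eval]


theorem stmt9 (n m ℓ : ℕ) (hn : 2 ≤ n) (hℓ : 1 ≤ ℓ) (hml : ℓ ≤ m) :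
    qhs n (List.replicate m 1) * qhs n (List.replicate ℓ 1)
      = ∑ j ∈ Finset.range (n - m),
          ((m - ℓ + 2 * j).choose j : ℂ) * Y3 n 0 ((ℓ : ℤ) - j) ((m : ℤ) - ℓ + 2 * j) := by
  have hS : (Finset.Icc 1 (n-1)).card = n - 1 := by rw [Nat.card_Icc]; omega
  rw [qhs_rep, qhs_rep, claim1 (fun i => 1 - zetaN n ^ i) _ m ℓ hml,
    ← Finset.sum_range_reflect]
  -- termwise identification on range (ℓ+1)
  have hterm : ∀ j ∈ Finset.range (ℓ+1),
      ((m+ℓ-2*(ℓ+1-1-j)).choose (m-(ℓ+1-1-j)) : ℂ) *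
        ∑ t ∈ (Finset.Icc 1 (n-1)).powersetCard (m+ℓ-(ℓ+1-1-j)),
          ∑ T ∈ t.powersetCard (ℓ+1-1-j),
            (∏ i ∈ T, (1 - zetaN n ^ i) ^ (-2:ℤ)) * ∏ i ∈ t \ T, (1 - zetaN n ^ i) ^ (-1:ℤ)
      = ((m - ℓ + 2 * j).choose j : ℂ) * Y3 n 0 ((ℓ : ℤ) - j) ((m : ℤ) - ℓ + 2 * j) := by
    intro j hj
    rw [Finset.mem_range] at hj
    have hjℓ : j ≤ ℓ := by omega
    rw [Y3_eval n m ℓ j hml hjℓ]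
    have e1 : ℓ+1-1-j = ℓ - j := by omega
    have e2 : m+ℓ-2*(ℓ-j) = m-ℓ+2*j := by omega
    have e3 : m+ℓ-(ℓ-j) = (ℓ-j) + (m-ℓ+2*j) := by omega
    have e4 : (m-ℓ+2*j).choose (m-(ℓ-j)) = (m-ℓ+2*j).choose j := by
      rw [show m-(ℓ-j) = (m-ℓ+2*j) - j by omega, Nat.choose_symm (by omega)]
    rw [e1, e2, e3, e4]
  rw [Finset.sum_congr rfl hterm]
  -- extend both ranges to a common range
  have hvanish : ∀ j, j ∈ Finset.range (max (ℓ+1) (n-m)) →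
      (ℓ + 1 ≤ j ∨ n - m ≤ j) →
      ((m - ℓ + 2 * j).choose j : ℂ) * Y3 n 0 ((ℓ : ℤ) - j) ((m : ℤ) - ℓ + 2 * j) = 0 := by
    intro j _ hcase
    by_cases hjℓ : j ≤ ℓ
    · -- then n - m ≤ j, so the powersetCard is empty
      have hnm : n ≤ m + j := by omega
      rw [Y3_eval n m ℓ j hml hjℓ]
      have : (Finset.Icc 1 (n-1)).powersetCard ((ℓ-j) + (m-ℓ+2*j)) = ∅ := by
        rw [Finset.powersetCard_eq_empty, hS]
        omega
      rw [this, Finset.sum_empty, mul_zero]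
    · -- Y3 is zero by sign condition
      have : Y3 n 0 ((ℓ:ℤ) - j) ((m:ℤ) - ℓ + 2*j) = 0 := by
        unfold Y3
        rw [if_neg]
        rintro ⟨-, h, -⟩
        omega
      rw [this, mul_zero]
  have hA := Finset.sum_subset (f := fun j => ((m - ℓ + 2 * j).choose j : ℂ) * Y3 n 0 ((ℓ : ℤ) - j) ((m : ℤ) - ℓ + 2 * j))
      (Finset.range_subset_range.mpr (le_max_left (ℓ+1) (n-m)))
      (fun j hj hj' => hvanish j hj (by rw [Finset.mem_range] at hj; rw [Finset.mem_range] at hj'; omega))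
  have hB := Finset.sum_subset (f := fun j => ((m - ℓ + 2 * j).choose j : ℂ) * Y3 n 0 ((ℓ : ℤ) - j) ((m : ℤ) - ℓ + 2 * j))
      (Finset.range_subset_range.mpr (le_max_right (ℓ+1) (n-m)))
      (fun j hj hj' => hvanish j hj (by rw [Finset.mem_range] at hj; rw [Finset.mem_range] at hj'; omega))
  exact hA.trans hB.symm
end
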